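/- arXiv:2304.10962 — 4 statements merged into one kernel-verified Lean document; each statement's English description precedes it below -/
import Mathlib

section
/- Let A = (Q, Σ, δ, s, F) be an input-consistent DFA in which the initial state s has no incoming transitions and every state is reachable from s. For any two distinct states u, v ∈ Q, it holds that u <_A v if and only if sup I_u ≤ inf I_v in the co-lex order on Σ* ∪ Σ^ω. -/
/-- A (possibly left-infinite) string over alphabet `A`, indexed from the END:
`f i` is the `i`-th character from the right, and `⊥` means the position is
past the beginning of the string.  The elements of `Σ* ∪ Σ^ω` are the
well-formed (`CStr.WF`) such functions. -/
abbrev CStr (A : Type*) := ℕ → WithBot A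

/-- Well-formed: once we run out of characters going leftwards, it stays so. -/
def CStr.WF {A : Type*} (f : CStr A) : Prop := ∀ i, f i = ⊥ → f (i + 1) = ⊥

/-- The string is finite (an element of `Σ*`). -/
def CStr.Finite {A : Type*} (f : CStr A) : Prop := ∃ i, f i = ⊥

/-- Length of a finite string. -/
noncomputable def CStr.length {A : Type*} (f : CStr A) : ℕ := sInf {i | f i = ⊥}

/-- A finite string, given as a list read left-to-right, viewed as a `CStr`. -/
def CStr.ofList {A : Type*} (w : List A) : CStr A := fun i =>
  if h : i < w.length then (w.get ⟨w.length - 1 - i, by omega⟩ : WithBot A) else ⊥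

/-- The co-lexicographic (strict) order on `Σ* ∪ Σ^ω`: compare the last
characters first (position `0`), a missing character (`⊥`) being smaller
than every character of the alphabet. -/
def colexLt {A : Type*} [LinearOrder A] (f g : CStr A) : Prop :=
  ∃ i, (∀ j, j < i → f j = g j) ∧ f i < g i

/-- The non-strict co-lex order. -/
def colexLe {A : Type*} [LinearOrder A] (f g : CStr A) : Prop := colexLt f g ∨ f = g

/-- `g` is the greatest lower bound (infimum) of `S` in `(Σ* ∪ Σ^ω, ≤)`. -/
def IsColexGLB {A : Type*} [LinearOrder A] (S : Set (CStr A)) (g : CStr A) : Prop :=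
  g.WF ∧ (∀ f ∈ S, colexLe g f) ∧ ∀ h, CStr.WF h → (∀ f ∈ S, colexLe h f) → colexLe h g

/-- `g` is the least upper bound (supremum) of `S` in `(Σ* ∪ Σ^ω, ≤)`. -/
def IsColexLUB {A : Type*} [LinearOrder A] (S : Set (CStr A)) (g : CStr A) : Prop :=
  g.WF ∧ (∀ f ∈ S, colexLe f g) ∧ ∀ h, CStr.WF h → (∀ f ∈ S, colexLe f h) → colexLe g h

/-- A DFA `(Q, A, δ, start, accept)` with a partial transition function. -/
structure PDFA (A Q : Type*) where
  δ : Q → A → Option Q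
  start : Q
  accept : Set Q

/-- The transition function extended to finite strings (read left-to-right). -/
def PDFA.δStar {A Q : Type*} (M : PDFA A Q) : Q → List A → Option Q
  | q, [] => some q
  | q, a :: w => (M.δ q a).bind fun q' => M.δStar q' w

/-- `I_u`: the set of finite strings reaching `u` from the initial state. -/
def PDFA.I {A Q : Type*} (M : PDFA A Q) (u : Q) : Set (List A) :=
  {w | M.δStar M.start w = some u}

/-- The initial state has no incoming transitions. -/
def PDFA.NoIncomingStart {A Q : Type*} (M : PDFA A Q) : Prop :=
  ∀ v a, M.δ v a ≠ some M.start

/-- Every state is reachable from the initial state. -/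
def PDFA.Reachable {A Q : Type*} (M : PDFA A Q) : Prop :=
  ∀ u, ∃ w : List A, M.δStar M.start w = some u

/-- Input consistency: all transitions entering a state `u` carry the same
label `lam u`. -/
def PDFA.InputConsistent {A Q : Type*} (M : PDFA A Q) (lam : Q → A) : Prop :=
  ∀ v a u, M.δ v a = some u → lam u = a

/-- The maximum co-lex order `<_A` on the states of a DFA:
`u <_A v` iff `α < β` for every `α ∈ I_u` and every `β ∈ I_v`. -/
def PDFA.colexStateLt {A Q : Type*} [LinearOrder A] (M : PDFA A Q) (u v : Q) : Prop :=
  ∀ α ∈ M.I u, ∀ β ∈ M.I v, colexLt (CStr.ofList α) (CStr.ofList β)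


lemma CStr.ofList_wf {A : Type*} (w : List A) : (CStr.ofList w).WF := by
  intro i h
  simp only [CStr.ofList] at h ⊢
  split at h
  · simp at h
  · rename_i hi
    rw [dif_neg (by omega)]

lemma CStr.ofList_bot_iff {A : Type*} (w : List A) (i : ℕ) :
    CStr.ofList w i = ⊥ ↔ w.length ≤ i := by
  simp only [CStr.ofList]
  split
  · rename_i hi; simp [Nat.not_le.mpr hi]
  · rename_i hi; simp [Nat.le_of_not_lt hi]

lemma CStr.ofList_inj {A : Type*} {w w' : List A}
    (h : CStr.ofList w = CStr.ofList w') : w = w' := by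
  have hlen : w.length = w'.length := by
    by_contra hne
    rcases Nat.lt_or_ge w.length w'.length with hl | hl
    · have h1 : CStr.ofList w w.length = ⊥ := (CStr.ofList_bot_iff _ _).mpr le_rfl
      rw [congrFun h w.length, CStr.ofList_bot_iff] at h1
      omega
    · have hl' : w'.length < w.length := by omega
      have h1 : CStr.ofList w' w'.length = ⊥ := (CStr.ofList_bot_iff _ _).mpr le_rfl
      rw [← congrFun h w'.length, CStr.ofList_bot_iff] at h1
      omega
  apply List.ext_get hlen
  intro n h1 h2
  have hc := congrFun h (w.length - 1 - n)
  have hi : w.length - 1 - n < w.length := by omega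
  have hi' : w.length - 1 - n < w'.length := by omega
  simp only [CStr.ofList, dif_pos hi, dif_pos hi'] at hc
  rw [WithBot.coe_inj] at hc
  simp only [List.get_eq_getElem] at hc ⊢
  convert hc using 2 <;> omega

lemma colexLt_trans {A : Type*} [LinearOrder A] {f g h : CStr A}
    (h1 : colexLt f g) (h2 : colexLt g h) : colexLt f h := by
  obtain ⟨i, hfg, hi⟩ := h1
  obtain ⟨k, hgh, hk⟩ := h2
  refine ⟨min i k, fun j hj => ?_, ?_⟩
  · rw [hfg j (lt_of_lt_of_le hj (min_le_left _ _)),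
      hgh j (lt_of_lt_of_le hj (min_le_right _ _))]
  · rcases lt_trichotomy i k with hik | hik | hik
    · rw [min_eq_left hik.le, ← hgh i hik]; exact hi
    · subst hik; rw [min_self]; exact hi.trans hk
    · rw [min_eq_right hik.le, hfg k hik]; exact hk

lemma colexLe_trans {A : Type*} [LinearOrder A] {f g h : CStr A}
    (h1 : colexLe f g) (h2 : colexLe g h) : colexLe f h := by
  rcases h1 with h1 | rfl
  · rcases h2 with h2 | rfl
    · exact Or.inl (colexLt_trans h1 h2)
    · exact Or.inl h1
  · exact h2

/-- For an input-consistent DFA whose initial state has no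
incoming transitions and all of whose states are reachable, and for any two
distinct states `u ≠ v`:  `u <_A v` iff `sup I_u ≤ inf I_v` in the co-lex
order on `Σ* ∪ Σ^ω`. -/
theorem maximum_colex_order_characterization
    {A Q : Type*} [LinearOrder A] [Fintype A] [Fintype Q]
    (M : PDFA A Q) (lam : Q → A) (hic : M.InputConsistent lam)
    (hstart : M.NoIncomingStart) (hreach : M.Reachable)
    (u v : Q) (huv : u ≠ v) (supIu infIv : CStr A)
    (hsup : IsColexLUB (CStr.ofList '' M.I u) supIu)
    (hinf : IsColexGLB (CStr.ofList '' M.I v) infIv) :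
    M.colexStateLt u v ↔ colexLe supIu infIv := by
  constructor
  · intro hlt
    apply hsup.2.2 infIv hinf.1
    rintro f ⟨α, hα, rfl⟩
    apply hinf.2.2 _ (CStr.ofList_wf α)
    rintro f' ⟨β, hβ, rfl⟩
    exact Or.inl (hlt α hα β hβ)
  · intro hle α hα β hβ
    have h1 := hsup.2.1 _ ⟨α, hα, rfl⟩
    have h2 := hinf.2.1 _ ⟨β, hβ, rfl⟩
    have h3 : colexLe (CStr.ofList α) (CStr.ofList β) :=
      colexLe_trans h1 (colexLe_trans hle h2)
    rcases h3 with h3 | h3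
    · exact h3
    · exfalso
      have : α = β := CStr.ofList_inj h3
      subst this
      rw [PDFA.I, Set.mem_setOf_eq] at hα hβ
      rw [hα] at hβ
      exact huv (Option.some.inj hβ)
end

section
/- Let A = (Q, Σ, δ, s, F) be a DFA in which the initial state s has no incoming transitions and every state is reachable from s, and let u ∈ Q. If γ ∈ {inf I_u, sup I_u} is a finite string, then |γ| < |Q|. -/
section Helpers
variable {A : Type*}

lemma getElem_idx_congr (l : List A) {i j : ℕ} {hi : i < l.length} {hj : j < l.length}
    (h : i = j) : l[i]'hi = l[j]'hj := by subst h; rfl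

lemma ofList_ne_bot {w : List A} {i : ℕ} (h : i < w.length) : CStr.ofList w i ≠ ⊥ := by
  simp [CStr.ofList, h]

lemma ofList_eq_bot {w : List A} {i : ℕ} (h : ¬ i < w.length) : CStr.ofList w i = ⊥ := by
  simp [CStr.ofList, h]

lemma ofList_WF (w : List A) : (CStr.ofList w).WF := by
  intro i hi
  apply ofList_eq_bot
  intro hlt
  exact ofList_ne_bot (by omega) hi

lemma ofList_Finite (w : List A) : (CStr.ofList w).Finite :=
  ⟨w.length, ofList_eq_bot (lt_irrefl _)⟩

lemma length_ofList (w : List A) : (CStr.ofList w).length = w.length := by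
  have hset : {i | CStr.ofList w i = ⊥} = Set.Ici w.length := by
    ext i
    by_cases h : i < w.length <;> simp [CStr.ofList, h] <;> omega
  unfold CStr.length
  rw [hset, csInf_Ici]

lemma CStr.length_bot {f : CStr A} (hf : f.Finite) : f f.length = ⊥ := Nat.sInf_mem hf

lemma ne_bot_of_lt_length {f : CStr A} {i : ℕ} (h : i < f.length) : f i ≠ ⊥ :=
  fun hb => absurd h (not_lt.mpr (Nat.sInf_le hb))

lemma WF.bot_mono {f : CStr A} (hw : f.WF) {i j : ℕ} (hij : i ≤ j) (h : f i = ⊥) : f j = ⊥ := by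
  induction j, hij using Nat.le_induction with
  | base => exact h
  | succ n hn ih => exact hw n ih

end Helpers

section Colex
variable {A : Type*} [LinearOrder A]

lemma colexLt_asymm {f g : CStr A} (h1 : colexLt f g) (h2 : colexLt g f) : False := by
  obtain ⟨i, hai, hi⟩ := h1
  obtain ⟨j, haj, hj⟩ := h2
  rcases lt_trichotomy i j with h | h | h
  · rw [haj i h] at hi; exact lt_irrefl _ hi
  · subst h; exact lt_irrefl _ (hi.trans hj)
  · rw [hai j h] at hj; exact lt_irrefl _ hj

lemma colexLe_lt_asymm {f g : CStr A} (h1 : colexLe f g) (h2 : colexLt g f) : False := by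
  rcases h1 with h1 | rfl
  · exact colexLt_asymm h1 h2
  · obtain ⟨i, _, hi⟩ := h2; exact lt_irrefl _ hi

lemma colexLt_total {f g : CStr A} (h : f ≠ g) : colexLt f g ∨ colexLt g f := by
  have hne : ∃ i, f i ≠ g i := Function.ne_iff.mp h
  have hp : f (sInf {i | f i ≠ g i}) ≠ g (sInf {i | f i ≠ g i}) := Nat.sInf_mem hne
  have hagree : ∀ j, j < sInf {i | f i ≠ g i} → f j = g j := by
    intro j hj
    by_contra hc
    exact absurd hj (not_lt.mpr (Nat.sInf_le hc))
  rcases lt_or_gt_of_ne hp with h | h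
  · exact Or.inl ⟨_, hagree, h⟩
  · exact Or.inr ⟨_, fun j hj => (hagree j hj).symm, h⟩

lemma ofList_ne_of_length_ne {u v : List A} (h : u.length ≠ v.length) :
    CStr.ofList u ≠ CStr.ofList v := by
  intro he
  rcases lt_or_gt_of_ne h with hl | hl
  · have h1 := congrFun he u.length
    rw [ofList_eq_bot (lt_irrefl _)] at h1
    exact ofList_ne_bot hl h1.symm
  · have h1 := congrFun he v.length
    rw [ofList_eq_bot (w := v) (lt_irrefl _)] at h1
    exact ofList_ne_bot hl h1

lemma ofList_append (u z : List A) (i : ℕ) :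
    CStr.ofList (u ++ z) i =
      if i < z.length then CStr.ofList z i else CStr.ofList u (i - z.length) := by
  unfold CStr.ofList
  by_cases h1 : i < z.length
  · have h2 : i < (u ++ z).length := by simp; omega
    rw [if_pos h1, dif_pos h2, dif_pos h1]
    have : (u ++ z).get ⟨(u ++ z).length - 1 - i, by omega⟩ =
        z.get ⟨z.length - 1 - i, by omega⟩ := by
      simp only [List.get_eq_getElem]
      rw [List.getElem_append_right (by simp; omega)]
      exact getElem_idx_congr _ (by simp; omega)
    rw [this]
  · rw [if_neg h1]
    by_cases h2 : i - z.length < u.length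
    · have h3 : i < (u ++ z).length := by simp; omega
      rw [dif_pos h3, dif_pos h2]
      have : (u ++ z).get ⟨(u ++ z).length - 1 - i, by omega⟩ =
          u.get ⟨u.length - 1 - (i - z.length), by omega⟩ := by
        simp only [List.get_eq_getElem]
        rw [List.getElem_append_left (by simp; omega)]
        exact getElem_idx_congr _ (by simp; omega)
      rw [this]
    · rw [dif_neg (by simp; omega), dif_neg h2]

lemma colexLt_append_iff (u v z : List A) :
    colexLt (CStr.ofList (u ++ z)) (CStr.ofList (v ++ z)) ↔
      colexLt (CStr.ofList u) (CStr.ofList v) := by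
  constructor
  · rintro ⟨i, ha, hi⟩
    have hiz : ¬ i < z.length := by
      intro h
      rw [ofList_append, ofList_append, if_pos h, if_pos h] at hi
      exact lt_irrefl _ hi
    refine ⟨i - z.length, ?_, ?_⟩
    · intro j hj
      have := ha (j + z.length) (by omega)
      rw [ofList_append, ofList_append, if_neg (by omega), if_neg (by omega)] at this
      simpa using this
    · rw [ofList_append, ofList_append, if_neg hiz, if_neg hiz] at hi
      exact hi
  · rintro ⟨i, ha, hi⟩
    refine ⟨i + z.length, ?_, ?_⟩
    · intro j hj
      rw [ofList_append, ofList_append]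
      by_cases h : j < z.length
      · rw [if_pos h, if_pos h]
      · rw [if_neg h, if_neg h]
        exact ha (j - z.length) (by omega)
    · rw [ofList_append, ofList_append, if_neg (by omega), if_neg (by omega)]
      simpa using hi

end Colex

section Automaton
variable {A Q : Type*}

lemma δStar_append (M : PDFA A Q) (q : Q) (a b : List A) :
    M.δStar q (a ++ b) = (M.δStar q a).bind fun p => M.δStar p b := by
  induction a generalizing q with
  | nil => simp [PDFA.δStar]
  | cons c t ih =>
    simp only [List.cons_append, PDFA.δStar]
    cases M.δ q c with
    | none => simp
    | some q' => simp [ih]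

lemma pump [Fintype Q] (M : PDFA A Q) (u : Q) (w : List A)
    (hw : M.δStar M.start w = some u) (hlen : Fintype.card Q ≤ w.length) :
    ∃ x y z : List A, w = x ++ y ++ z ∧ y ≠ [] ∧
      M.δStar M.start (x ++ z) = some u ∧
      M.δStar M.start (x ++ y ++ (y ++ z)) = some u := by
  have hpre : ∀ i : ℕ, ∃ q, M.δStar M.start (w.take i) = some q := by
    intro i
    have : M.δStar M.start (w.take i ++ w.drop i) = some u := by
      rw [List.take_append_drop]; exact hw
    rw [δStar_append] at this
    rcases hq : M.δStar M.start (w.take i) with _ | q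
    · rw [hq] at this; simp at this
    · exact ⟨q, rfl⟩
  choose f hf using hpre
  obtain ⟨i, j, hne, heq⟩ :=
    Fintype.exists_ne_map_eq_of_card_lt (fun i : Fin (w.length + 1) => f i)
      (by simp; omega)
  -- wlog i < j
  obtain ⟨i, j, hij, heq⟩ : ∃ i j : Fin (w.length + 1), (i : ℕ) < (j : ℕ) ∧ f i = f j := by
    rcases lt_or_gt_of_ne hne with h | h
    · exact ⟨i, j, h, heq⟩
    · exact ⟨j, i, h, heq.symm⟩
  have hjw : (j : ℕ) ≤ w.length := by omega
  refine ⟨w.take i, (w.take j).drop i, w.drop j, ?_, ?_, ?_, ?_⟩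
  · rw [show (w.take (i : ℕ)) = (w.take (j:ℕ)).take (i : ℕ) by
      rw [List.take_take]; congr 1; omega]
    rw [List.take_append_drop, List.take_append_drop]
  · have : ((w.take (j:ℕ)).drop (i:ℕ)).length = (j : ℕ) - (i : ℕ) := by
      simp; omega
    intro hnil
    rw [hnil] at this
    simp at this
    omega
  · -- x ++ z
    have hxy : w.take (i:ℕ) ++ (w.take (j:ℕ)).drop (i:ℕ) = w.take (j:ℕ) := by
      conv_rhs => rw [← List.take_append_drop (i:ℕ) (w.take (j:ℕ))]
      rw [List.take_take]
      congr 2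
      omega
    have hfj : M.δStar (f j) (w.drop (j:ℕ)) = some u := by
      have := hw
      rw [← List.take_append_drop (j:ℕ) w, δStar_append, hf j] at this
      simpa using this
    rw [δStar_append, hf i, heq]
    simpa using hfj
  · have hxy : w.take (i:ℕ) ++ (w.take (j:ℕ)).drop (i:ℕ) = w.take (j:ℕ) := by
      conv_rhs => rw [← List.take_append_drop (i:ℕ) (w.take (j:ℕ))]
      rw [List.take_take]
      congr 2
      omega
    have hfj : M.δStar (f j) (w.drop (j:ℕ)) = some u := by
      have := hw
      rw [← List.take_append_drop (j:ℕ) w, δStar_append, hf j] at this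
      simpa using this
    have hy : M.δStar (f i) ((w.take (j:ℕ)).drop (i:ℕ)) = some (f j) := by
      have := hf j
      rw [← hxy, δStar_append, hf i] at this
      simpa using this
    rw [δStar_append, δStar_append, hf i]
    simp only [Option.bind_some]
    rw [hy]
    simp only [Option.bind_some]
    have hy' : M.δStar (f ↑j) (List.drop (↑i) (List.take (↑j) w)) = some (f ↑j) := by
      rw [heq] at hy; exact hy
    rw [δStar_append, hy']
    simp only [Option.bind_some]
    exact hfj

end Automaton

section Mem
variable {A : Type*} [LinearOrder A] [Fintype A]

lemma glb_mem {S : Set (CStr A)} {γ : CStr A}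
    (hglb : IsColexGLB S γ) (hfin : γ.Finite) (hne : S.Nonempty)
    (hwf : ∀ f ∈ S, f.WF) : γ ∈ S := by
  classical
  by_contra hγS
  obtain ⟨hγwf, hlb, hgr⟩ := hglb
  have hlt : ∀ f ∈ S, colexLt γ f := by
    intro f hf
    rcases hlb f hf with h | h
    · exact h
    · exact absurd (h ▸ hf) hγS
  obtain ⟨α₀, hα₀⟩ := hne
  obtain ⟨i₀, _, hi₀⟩ := hlt α₀ hα₀
  have hA : Nonempty A := by
    rcases hb : α₀ i₀ with _ | a
    · rw [hb] at hi₀; exact absurd hi₀ (by exact not_lt_bot)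
    · exact ⟨a⟩
  set L := γ.length with hL
  have hγL : γ L = ⊥ := CStr.length_bot hfin
  set m₀ : A := Finset.univ.min' Finset.univ_nonempty with hm₀
  set h : CStr A := fun j => if j < L then γ j else if j = L then (m₀ : WithBot A) else ⊥
    with hh
  have hhlt : ∀ j, j < L → h j = γ j := fun j hj => by
    simp only [hh]; rw [if_pos hj]
  have hhL : h L = (m₀ : WithBot A) := by
    simp only [hh]; rw [if_neg (lt_irrefl L)]; simp
  have hhgt : ∀ j, L < j → h j = ⊥ := fun j hj => by
    simp only [hh]; rw [if_neg (by omega), if_neg (by omega)]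
  have hWF : h.WF := by
    intro i hi
    rcases lt_trichotomy i L with hc | hc | hc
    · rw [hhlt i hc] at hi
      exact absurd hi (ne_bot_of_lt_length hc)
    · rw [hc, hhL] at hi
      exact absurd hi (by simp)
    · exact hhgt _ (by omega)
  have hγh : colexLt γ h := by
    refine ⟨L, fun j hj => (hhlt j hj).symm, ?_⟩
    rw [hγL, hhL]
    exact bot_lt_iff_ne_bot.mpr (by simp)
  have hub : ∀ f ∈ S, colexLe h f := by
    intro α hα
    obtain ⟨i, hag, hi⟩ := hlt α hα
    have hiL : i ≤ L := by
      by_contra hc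
      have h1 : α L = ⊥ := (hag L (by omega)).symm.trans hγL
      have h2 : α i = ⊥ := WF.bot_mono (hwf α hα) (by omega) h1
      rw [h2] at hi
      exact absurd hi (by simp)
    rcases lt_or_eq_of_le hiL with hiL | hiL
    · refine Or.inl ⟨i, fun j hj => ?_, ?_⟩
      · rw [hhlt j (by omega)]; exact hag j hj
      · rw [hhlt i hiL]; exact hi
    · rw [hiL, hγL] at hi
      rw [hiL] at hag
      obtain ⟨a, ha⟩ : ∃ a : A, α L = a := by
        rcases hb : α L with _ | a
        · rw [hb] at hi; exact absurd hi (by exact not_lt_bot)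
        · exact ⟨a, rfl⟩
      have hm : m₀ ≤ a := Finset.min'_le _ _ (Finset.mem_univ a)
      have hagree' : ∀ j, j < L → h j = α j := fun j hj =>
        (hhlt j hj).trans (hag j hj)
      rcases lt_or_eq_of_le hm with hm | hm
      · refine Or.inl ⟨L, hagree', ?_⟩
        rw [ha, hhL]
        exact_mod_cast hm
      · by_cases hb : α (L + 1) = ⊥
        · refine Or.inr (funext fun j => ?_)
          rcases lt_trichotomy j L with hj | hj | hj
          · exact hagree' j hj
          · rw [hj, hhL, ha, hm]
          · rw [hhgt j hj, WF.bot_mono (hwf α hα) (by omega) hb]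
        · refine Or.inl ⟨L + 1, fun j hj => ?_, ?_⟩
          · rcases lt_or_eq_of_le (Nat.lt_succ_iff.mp hj) with hj | hj
            · exact hagree' j hj
            · rw [hj, hhL, ha, hm]
          · rw [hhgt (L + 1) (by omega)]
            exact bot_lt_iff_ne_bot.mpr hb
  exact colexLe_lt_asymm (hgr h hWF hub) hγh

lemma lub_mem {S : Set (CStr A)} {γ : CStr A}
    (hlub : IsColexLUB S γ) (hfin : γ.Finite) (hne : S.Nonempty)
    (hwf : ∀ f ∈ S, f.WF) (hfinS : ∀ f ∈ S, f.Finite) : γ ∈ S := by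
  classical
  by_contra hγS
  obtain ⟨hγwf, hub, hlr⟩ := hlub
  have hlt : ∀ f ∈ S, colexLt f γ := by
    intro f hf
    rcases hub f hf with h | h
    · exact h
    · exact absurd (h.symm ▸ hf) hγS
  set L := γ.length with hLdef
  have hγL : γ L = ⊥ := CStr.length_bot hfin
  have hwit : ∀ i, (∃ α ∈ S, (∀ j, j < i → α j = γ j) ∧ α i < γ i) → i < L := by
    rintro i ⟨α, hα, hag, hi⟩
    by_contra hc
    rw [WF.bot_mono hγwf (not_lt.mp hc) hγL] at hi
    exact absurd hi (by simp)
  set P : ℕ → Prop := fun i => ∃ α ∈ S, (∀ j, j < i → α j = γ j) ∧ α i < γ i with hPdef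
  obtain ⟨α₀, hα₀⟩ := hne
  obtain ⟨i₀, hag₀, hi₀⟩ := hlt α₀ hα₀
  have hP₀ : P i₀ := ⟨α₀, hα₀, hag₀, hi₀⟩
  set k := Nat.findGreatest P L with hkdef
  have hPk : P k := Nat.findGreatest_spec (le_of_lt (hwit i₀ hP₀)) hP₀
  have hkmax : ∀ i, P i → i ≤ k := fun i hi =>
    Nat.le_findGreatest (le_of_lt (hwit i hi)) hi
  have hkL : k < L := hwit k hPk
  have hγk : γ k ≠ ⊥ := ne_bot_of_lt_length hkL
  set C : Finset A := Finset.univ.filter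
    (fun a => ∃ α ∈ S, (∀ j, j < k → α j = γ j) ∧ α k = (a : WithBot A) ∧
      (a : WithBot A) < γ k) with hCdef
  have hwitk : ∀ α ∈ S, ∀ i, (∀ j, j < i → α j = γ j) → α i < γ i → i ≤ k := by
    intro α hα i hag hi
    exact hkmax i ⟨α, hα, hag, hi⟩
  by_cases hC : C.Nonempty
  · -- C nonempty: use c' = max of C, pad with max char
    set c' : A := C.max' hC with hc'def
    have hc'mem : c' ∈ C := C.max'_mem hC
    have hc'lt : (c' : WithBot A) < γ k := by
      rw [hCdef] at hc'mem
      simp only [Finset.mem_filter] at hc'mem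
      exact hc'mem.2.choose_spec.2.2.2
    have hA : Nonempty A := ⟨c'⟩
    set m : A := Finset.univ.max' Finset.univ_nonempty with hmdef
    set h : CStr A := fun j =>
      if j < k then γ j else if j = k then (c' : WithBot A) else (m : WithBot A) with hh
    have hhlt : ∀ j, j < k → h j = γ j := fun j hj => by
      simp only [hh]; rw [if_pos hj]
    have hhk : h k = (c' : WithBot A) := by
      simp only [hh]; rw [if_neg (lt_irrefl k)]; simp
    have hhgt : ∀ j, k < j → h j = (m : WithBot A) := fun j hj => by
      simp only [hh]; rw [if_neg (by omega), if_neg (by omega)]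
    have hhne : ∀ j, h j ≠ ⊥ := by
      intro j
      rcases lt_trichotomy j k with hc | hc | hc
      · rw [hhlt j hc]; exact ne_bot_of_lt_length (by omega)
      · rw [hc, hhk]; simp
      · rw [hhgt j hc]; simp
    have hWF : h.WF := fun i hi => absurd hi (hhne i)
    have hhγ : colexLt h γ := ⟨k, fun j hj => hhlt j hj, by rw [hhk]; exact hc'lt⟩
    have hubh : ∀ f ∈ S, colexLe f h := by
      intro α hα
      obtain ⟨i, hag, hi⟩ := hlt α hα
      have hik : i ≤ k := hwitk α hα i hag hi
      rcases lt_or_eq_of_le hik with hik | hik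
      · exact Or.inl ⟨i, fun j hj => (hag j hj).trans (hhlt j (by omega)).symm,
          by rw [hhlt i hik]; exact hi⟩
      · rw [hik] at hag hi
        have hagh : ∀ j, j < k → α j = h j := fun j hj =>
          (hag j hj).trans (hhlt j hj).symm
        rcases hak : α k with _ | b
        · exact Or.inl ⟨k, hagh, by rw [hak, hhk]; exact WithBot.bot_lt_coe c'⟩
        · have hbC : b ∈ C := by
            rw [hCdef]
            simp only [Finset.mem_filter, Finset.mem_univ, true_and]
            exact ⟨α, hα, hag, hak, by rw [hak, WithBot.some_eq_coe] at hi; exact hi⟩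
          have hbc' : b ≤ c' := C.le_max' b hbC
          rcases lt_or_eq_of_le hbc' with hbc' | hbc'
          · exact Or.inl ⟨k, hagh, by rw [hak, hhk, WithBot.some_eq_coe]; exact_mod_cast hbc'⟩
          · -- b = c' : compare beyond position k
            obtain ⟨N, hN⟩ := hfinS α hα
            have hND : α N ≠ h N := by rw [hN]; exact fun he => hhne N he.symm
            have hDne : ∃ p, α p ≠ h p := ⟨N, hND⟩
            set p := sInf {p | α p ≠ h p} with hpdef
            have hp : α p ≠ h p := Nat.sInf_mem hDne
            have hpag : ∀ j, j < p → α j = h j := by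
              intro j hj
              by_contra hc2
              exact absurd hj (not_lt.mpr (Nat.sInf_le hc2))
            have hpk : k < p := by
              rcases lt_trichotomy p k with hc2 | hc2 | hc2
              · exact absurd (hagh p hc2) hp
              · exact absurd (by rw [hc2, hak, hhk, hbc', WithBot.some_eq_coe] : α p = h p) hp
              · exact hc2
            refine Or.inl ⟨p, hpag, ?_⟩
            rw [hhgt p hpk]
            rw [hhgt p hpk] at hp
            rcases hap : α p with _ | b'
            · exact WithBot.bot_lt_coe m
            · rw [WithBot.some_eq_coe]
              rw [hap, WithBot.some_eq_coe] at hp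
              have hb'm : b' ≤ m := Finset.le_max' _ b' (Finset.mem_univ b')
              exact_mod_cast lt_of_le_of_ne hb'm (by exact_mod_cast hp)
    exact colexLe_lt_asymm (hlr h hWF hubh) hhγ
  · -- C empty: h = prefix of γ of length k
    set h : CStr A := fun j => if j < k then γ j else ⊥ with hh
    have hhlt : ∀ j, j < k → h j = γ j := fun j hj => by
      simp only [hh]; rw [if_pos hj]
    have hhge : ∀ j, k ≤ j → h j = ⊥ := fun j hj => by
      simp only [hh]; rw [if_neg (by omega)]
    have hWF : h.WF := by
      intro i hi
      rcases lt_or_ge i k with hc | hc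
      · rw [hhlt i hc] at hi
        exact absurd hi (ne_bot_of_lt_length (by omega))
      · exact hhge _ (by omega)
    have hhγ : colexLt h γ := ⟨k, fun j hj => hhlt j hj, by
      rw [hhge k le_rfl]; exact bot_lt_iff_ne_bot.mpr hγk⟩
    have hubh : ∀ f ∈ S, colexLe f h := by
      intro α hα
      obtain ⟨i, hag, hi⟩ := hlt α hα
      have hik : i ≤ k := hwitk α hα i hag hi
      rcases lt_or_eq_of_le hik with hik | hik
      · exact Or.inl ⟨i, fun j hj => (hag j hj).trans (hhlt j (by omega)).symm,
          by rw [hhlt i hik]; exact hi⟩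
      · rw [hik] at hag hi
        have hak : α k = ⊥ := by
          rcases hak : α k with _ | b
          · rfl
          · exfalso
            apply hC
            refine ⟨b, ?_⟩
            rw [hCdef]
            simp only [Finset.mem_filter, Finset.mem_univ, true_and]
            exact ⟨α, hα, hag, hak, by rw [hak, WithBot.some_eq_coe] at hi; exact hi⟩
        refine Or.inr (funext fun j => ?_)
        rcases lt_or_ge j k with hj | hj
        · exact (hag j hj).trans (hhlt j hj).symm
        · rw [hhge j hj]
          exact WF.bot_mono (hwf α hα) hj hak
    exact colexLe_lt_asymm (hlr h hWF hubh) hhγ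

end Mem

/-- Let `γ ∈ {inf I_u, sup I_u}` for a state `u` of a DFA
whose initial state has no incoming transitions and all of whose states are
reachable.  If `γ` is a finite string, then `|γ| < |Q|`. -/
theorem finite_infimum_supremum_length_lt_card
    {A Q : Type*} [LinearOrder A] [Fintype A] [Fintype Q]
    (M : PDFA A Q) (hstart : M.NoIncomingStart) (hreach : M.Reachable)
    (u : Q) (γ : CStr A)
    (hγ : IsColexGLB (CStr.ofList '' M.I u) γ ∨ IsColexLUB (CStr.ofList '' M.I u) γ)
    (hfin : γ.Finite) :
    γ.length < Fintype.card Q := by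
  classical
  by_contra hL
  push_neg at hL
  have hSne : (CStr.ofList '' M.I u).Nonempty := by
    obtain ⟨w, hw⟩ := hreach u
    exact ⟨CStr.ofList w, w, hw, rfl⟩
  have hwfS : ∀ f ∈ CStr.ofList '' M.I u, CStr.WF f := by
    rintro f ⟨w, hw, rfl⟩; exact ofList_WF w
  have hfinS : ∀ f ∈ CStr.ofList '' M.I u, CStr.Finite f := by
    rintro f ⟨w, hw, rfl⟩; exact ofList_Finite w
  have hγmem : γ ∈ CStr.ofList '' M.I u := by
    rcases hγ with h | h
    · exact glb_mem h hfin hSne hwfS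
    · exact lub_mem h hfin hSne hwfS hfinS
  obtain ⟨w, hw, hwγ⟩ := hγmem
  have hwlen : w.length = γ.length := by rw [← hwγ, length_ofList]
  obtain ⟨x, y, z, hxyz, hy, h0, h2⟩ := pump M u w hw (by omega)
  have hylen : 0 < y.length := List.length_pos_iff.mpr hy
  have hwlen2 : w.length = x.length + y.length + z.length := by
    rw [hxyz]; simp; omega
  have ne1 : CStr.ofList (x ++ z) ≠ γ := by
    rw [← hwγ]
    exact ofList_ne_of_length_ne (by simp; omega)
  have ne2 : CStr.ofList (x ++ y ++ (y ++ z)) ≠ γ := by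
    rw [← hwγ]
    exact ofList_ne_of_length_ne (by simp; omega)
  have hγw : γ = CStr.ofList ((x ++ y) ++ z) := by rw [← hwγ, hxyz]
  have hγw' : γ = CStr.ofList (x ++ (y ++ z)) := by
    rw [hγw, List.append_assoc]
  rcases hγ with hglb | hlub
  · have hlow := hglb.2.1
    have hA : colexLe γ (CStr.ofList (x ++ z)) := hlow _ ⟨x ++ z, h0, rfl⟩
    have lt1 : colexLt γ (CStr.ofList (x ++ z)) := by
      rcases hA with h | h
      · exact h
      · exact absurd h.symm ne1
    rw [hγw] at lt1
    have ltc : colexLt (CStr.ofList (x ++ y)) (CStr.ofList x) :=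
      (colexLt_append_iff _ _ z).mp lt1
    have lt2 : colexLt (CStr.ofList ((x ++ y) ++ (y ++ z))) (CStr.ofList (x ++ (y ++ z))) :=
      (colexLt_append_iff _ _ (y ++ z)).mpr ltc
    rw [← hγw'] at lt2
    exact colexLe_lt_asymm (hlow _ ⟨x ++ y ++ (y ++ z), h2, rfl⟩) lt2
  · have hup := hlub.2.1
    have hA : colexLe (CStr.ofList (x ++ z)) γ := hup _ ⟨x ++ z, h0, rfl⟩
    have lt1 : colexLt (CStr.ofList (x ++ z)) γ := by
      rcases hA with h | h
      · exact h
      · exact absurd h ne1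
    rw [hγw] at lt1
    have ltc : colexLt (CStr.ofList x) (CStr.ofList (x ++ y)) :=
      (colexLt_append_iff _ _ z).mp lt1
    have lt2 : colexLt (CStr.ofList (x ++ (y ++ z))) (CStr.ofList ((x ++ y) ++ (y ++ z))) :=
      (colexLt_append_iff _ _ (y ++ z)).mpr ltc
    rw [← hγw'] at lt2
    exact colexLe_lt_asymm (hup _ ⟨x ++ y ++ (y ++ z), h2, rfl⟩) lt2
end

section
/- Let α = α₂^ω α₁ and β = β₂^ω β₁ be two left-infinite ω-strings, where α₁, β₁ ∈ Σ* and α₂, β₂ ∈ Σ⁺. Let α' and β' be the suffixes of α and β, respectively, of length k = |α₂| + |β₂| + max(|α₁|, |β₁|). Then α' < β' in the co-lex order if and only if α < β in the co-lex order. -/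
/-- `suf_k`: the length-`k` suffix of a string; positions `≥ k` are cut off.
(The `⊥` entries at positions `< k` play the role of the left-padding symbol
`#`, which is smaller than every character of the alphabet.) -/
def CStr.suf {A : Type*} (k : ℕ) (f : CStr A) : CStr A := fun i => if i < k then f i else ⊥

/-- `β^ω · α` : the left-infinite string obtained by concatenating infinitely
many copies of `β`, followed (at the right end) by `α`. -/
def CStr.omegaAppend {A : Type*} (b a : List A) : CStr A := fun i =>
  if i < a.length then CStr.ofList a i
  else CStr.ofList b ((i - a.length) % b.length)

/-- Appending one character at the (right) end of a possibly infinite string. -/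
def CStr.snoc {A : Type*} (f : CStr A) (a : A) : CStr A := fun i =>
  match i with
  | 0 => (a : WithBot A)
  | Nat.succ j => f j

/-- Removing the last `k` characters of a string. -/
def CStr.drop {A : Type*} (f : CStr A) (k : ℕ) : CStr A := fun i => f (i + k)

/-- `suf_m(x)` is a prefix of `suf_{2m}(y)`. -/
def ExtPrefix {A : Type*} (x y : CStr A) (m : ℕ) : Prop := ∀ j, j < m → x j = y (m + j)

/-- The set of extenders of `u` at distance `m` (used with `m = 2^k`), where
`g u` denotes the infimum string `inf I_u`:
`P(u) = {v ∈ Q : δ(v, suf_m(inf I_u)) = u ∧ suf_m(inf I_v) is a prefix of suf_{2m}(inf I_u)}`.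
(The first condition is expressed by exhibiting the genuine length-`m` word
`w = suf_m(inf I_u)` over the alphabet; if `inf I_u` is shorter than `m`, the
padded suffix contains `#` and no state can read it, as `# ∉ Σ`.) -/
def PDFA.Pset {A Q : Type*} (M : PDFA A Q) (g : Q → CStr A) (m : ℕ) (u : Q) : Set Q :=
  {v | (∃ w : List A, w.length = m ∧ (∀ j, j < m → CStr.ofList w j = g u j) ∧
          M.δStar v w = some u) ∧ ExtPrefix (g v) (g u) m}

lemma omegaAppend_period {A : Type*} (b a : List A) (i : ℕ) (h : a.length ≤ i) :
    CStr.omegaAppend b a (i + b.length) = CStr.omegaAppend b a i := by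
  unfold CStr.omegaAppend
  rw [if_neg (by omega), if_neg (by omega)]
  have : i + b.length - a.length = (i - a.length) + b.length := by omega
  rw [this, Nat.add_mod_right]

lemma omegaAppend_agree_all {A : Type*} (α₁ β₁ α₂ β₂ : List A)
    (hα₂ : α₂ ≠ []) (hβ₂ : β₂ ≠ [])
    (h : ∀ j, j < α₂.length + β₂.length + max α₁.length β₁.length →
        CStr.omegaAppend α₂ α₁ j = CStr.omegaAppend β₂ β₁ j) :
    ∀ j, CStr.omegaAppend α₂ α₁ j = CStr.omegaAppend β₂ β₁ j := by
  intro j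
  induction j using Nat.strong_induction_on with
  | _ j ih =>
    set p := α₂.length with hp'
    set q := β₂.length with hq'
    set m := max α₁.length β₁.length with hm'
    by_cases hj : j < p + q + m
    · exact h j hj
    · push_neg at hj
      have hp : 1 ≤ p := List.length_pos_iff.mpr hα₂
      have hq : 1 ≤ q := List.length_pos_iff.mpr hβ₂
      have ha1 : α₁.length ≤ m := le_max_left _ _
      have hb1 : β₁.length ≤ m := le_max_right _ _
      set f := CStr.omegaAppend α₂ α₁
      set g := CStr.omegaAppend β₂ β₁
      have e1 : f j = f (j - p) := by
        have := omegaAppend_period α₂ α₁ (j - p) (by omega)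
        rw [show (j - p) + p = j by omega] at this
        exact this
      have e2 : f (j - p) = g (j - p) := ih _ (by omega)
      have e3 : g (j - p) = g (j - p - q) := by
        have := omegaAppend_period β₂ β₁ (j - p - q) (by omega)
        rw [show (j - p - q) + q = j - p by omega] at this
        exact this
      have e4 : g (j - p - q) = f (j - p - q) := (ih _ (by omega)).symm
      have e5 : f (j - p - q) = f (j - q) := by
        have := omegaAppend_period α₂ α₁ (j - p - q) (by omega)
        rw [show (j - p - q) + p = j - q by omega] at this
        exact this.symm
      have e6 : f (j - q) = g (j - q) := ih _ (by omega)
      have e7 : g (j - q) = g j := by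
        have := omegaAppend_period β₂ β₁ (j - q) (by omega)
        rw [show (j - q) + q = j by omega] at this
        exact this.symm
      rw [e1, e2, e3, e4, e5, e6, e7]

/-- For two left-infinite ω-strings `α = α₂^ω α₁` and
`β = β₂^ω β₁` with `α₁, β₁ ∈ Σ*` and `α₂, β₂ ∈ Σ⁺`, comparing their suffixes
of length `k = |α₂| + |β₂| + max(|α₁|, |β₁|)` in co-lex order is the same as
comparing `α` and `β`. -/
theorem omega_string_colex_order_determined_by_suffix
    {A : Type*} [LinearOrder A] [Fintype A]
    (α₁ β₁ α₂ β₂ : List A) (hα₂ : α₂ ≠ []) (hβ₂ : β₂ ≠ []) :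
    colexLt (CStr.suf (α₂.length + β₂.length + max α₁.length β₁.length)
               (CStr.omegaAppend α₂ α₁))
            (CStr.suf (α₂.length + β₂.length + max α₁.length β₁.length)
               (CStr.omegaAppend β₂ β₁)) ↔
    colexLt (CStr.omegaAppend α₂ α₁) (CStr.omegaAppend β₂ β₁) := by
  set k := α₂.length + β₂.length + max α₁.length β₁.length with hk
  constructor
  · rintro ⟨i, hlt, hi⟩
    have hik : i < k := by
      by_contra hik
      rw [CStr.suf, CStr.suf] at hi
      simp only [if_neg hik] at hi
      exact absurd hi (lt_irrefl _)
    refine ⟨i, fun j hj => ?_, ?_⟩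
    · have := hlt j hj
      rw [CStr.suf, CStr.suf, if_pos (by omega), if_pos (by omega)] at this
      exact this
    · rw [CStr.suf, CStr.suf, if_pos hik, if_pos hik] at hi
      exact hi
  · rintro ⟨i, hlt, hi⟩
    have hik : i < k := by
      by_contra hik
      push_neg at hik
      have := omegaAppend_agree_all α₁ β₁ α₂ β₂ hα₂ hβ₂
        (fun j hj => hlt j (lt_of_lt_of_le hj hik)) i
      exact absurd this (ne_of_lt hi)
    refine ⟨i, fun j hj => ?_, ?_⟩
    · rw [CStr.suf, CStr.suf, if_pos (by omega), if_pos (by omega)]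
      exact hlt j hj
    · rw [CStr.suf, CStr.suf, if_pos hik, if_pos hik]
      exact hi
end

section
/- Let A = (Q, Σ, δ, s, F) be an input-consistent DFA in which the initial state s has no incoming transitions and every state is reachable from s, and let k ≥ 1. Let u ∈ Q and let v₁, v₂ ∈ P_k(u) be two distinct extenders of u at distance 2^k. Then P_k(v₁) ∩ P_k(v₂) = ∅. -/
/-- For an input-consistent DFA whose initial state has no
incoming transitions and all of whose states are reachable, for `k ≥ 1` and
distinct extenders `v₁ ≠ v₂ ∈ P_k(u)` of a state `u` at distance `2^k`:
`P_k(v₁) ∩ P_k(v₂) = ∅`. -/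
theorem extender_sets_of_distinct_extenders_disjoint
    {A Q : Type*} [LinearOrder A] [Fintype A] [Fintype Q]
    (M : PDFA A Q) (lam : Q → A) (hic : M.InputConsistent lam)
    (hstart : M.NoIncomingStart) (hreach : M.Reachable)
    (ginf : Q → CStr A)
    (hinf : ∀ u, IsColexGLB (CStr.ofList '' M.I u) (ginf u))
    (k : ℕ) (hk : 1 ≤ k) (u v₁ v₂ : Q) (hv : v₁ ≠ v₂)
    (h₁ : v₁ ∈ M.Pset ginf (2 ^ k) u) (h₂ : v₂ ∈ M.Pset ginf (2 ^ k) u) :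
    M.Pset ginf (2 ^ k) v₁ ∩ M.Pset ginf (2 ^ k) v₂ = ∅ := by
  ext z
  simp only [Set.mem_inter_iff, Set.mem_empty_iff_false, iff_false]
  rintro ⟨⟨⟨w₁, hl₁, ha₁, hd₁⟩, -⟩, ⟨⟨w₂, hl₂, ha₂, hd₂⟩, -⟩⟩
  obtain ⟨-, hp₁⟩ := h₁
  obtain ⟨-, hp₂⟩ := h₂
  have hw : w₁ = w₂ := by
    apply List.ext_get (by omega)
    intro i hi hi'
    have hj : 2 ^ k - 1 - i < 2 ^ k := by
      have : 0 < 2 ^ k := Nat.pow_pos (by norm_num)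
      omega
    have e : CStr.ofList w₁ (2 ^ k - 1 - i) = CStr.ofList w₂ (2 ^ k - 1 - i) := by
      rw [ha₁ _ hj, hp₁ _ hj, ← hp₂ _ hj, ← ha₂ _ hj]
    have hi₁ : 2 ^ k - 1 - i < w₁.length := by omega
    have hi₂ : 2 ^ k - 1 - i < w₂.length := by omega
    rw [CStr.ofList, CStr.ofList] at e
    simp only [hi₁, hi₂, dif_pos] at e
    have e' : w₁.get ⟨w₁.length - 1 - (2 ^ k - 1 - i), by omega⟩ =
        w₂.get ⟨w₂.length - 1 - (2 ^ k - 1 - i), by omega⟩ := by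
      exact_mod_cast e
    have k₁ : w₁.length - 1 - (2 ^ k - 1 - i) = i := by omega
    have k₂ : w₂.length - 1 - (2 ^ k - 1 - i) = i := by omega
    simpa [k₁, k₂] using e'
  apply hv
  rw [hw, hd₂] at hd₁
  exact (Option.some_inj.mp hd₁).symm
end
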